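/- arXiv:2001.02017 — 3 statements merged into one kernel-verified Lean document; each statement's English description precedes it below -/
import Mathlib

section
/- Let N be a strongly reachable k-pair network with a fixed choice of paths P_{s_i,t_j} such that for each j the paths in P_{t_j} are pairwise arc-disjoint, and let C = (c^{(1)},…,c^{(k)}) be a tuple of k×k real matrices satisfying, for every l: Σ_{j=1}^k c^{(l)}_{i,j} = 0 for all i ≠ l, Σ_{i=1}^k c^{(l)}_{i,j} = 0 for all j ≠ l, and Σ_{i,j=1}^k c^{(l)}_{i,j} = 1. If g_s(C) ≤ 1 for every s ∈ S_N, then the multi-flow (f_1,…,f_k) with f_l := Σ_{i,j=1}^k c^{(l)}_{i,j} f_{i,j} is a linear routing solution of N, i.e., it is feasible and has rate (1,1,…,1). -/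
open scoped BigOperators

/-- A `k`-pair network: a finite DAG with `k` sources of in-degree 0 and
`k` sinks of out-degree 0. -/
structure KPairNetwork (k : ℕ) where
  V : Type
  A : Type
  [fintypeV : Fintype V]
  [fintypeA : Fintype A]
  [decEqV : DecidableEq V]
  [decEqA : DecidableEq A]
  tail : A → V
  head : A → V
  /-- acyclicity, via a topological ordering of the vertices -/
  acyclic : ∃ ord : V → ℕ, ∀ a : A, ord (tail a) < ord (head a)
  src : Fin k → V
  snk : Fin k → V
  src_inj : Function.Injective src
  snk_inj : Function.Injective snk
  src_no_in : ∀ (i : Fin k) (a : A), head a ≠ src i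
  snk_no_out : ∀ (i : Fin k) (a : A), tail a ≠ snk i

attribute [instance] KPairNetwork.fintypeV KPairNetwork.fintypeA
attribute [instance] KPairNetwork.decEqV KPairNetwork.decEqA

namespace KPairNetwork

variable {k : ℕ} (N : KPairNetwork k)

/-- `l` is (the list of arcs of) a directed path from `u` to `v`. -/
def IsPathFrom (u v : N.V) (l : List N.A) : Prop :=
  l ≠ [] ∧ l.Chain' (fun a b => N.head a = N.tail b) ∧
    (∀ a ∈ l.head?, N.tail a = u) ∧ (∀ a ∈ l.getLast?, N.head a = v)

/-- The vertices lying on a (nonempty) list of arcs. -/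
def pathVerts (l : List N.A) : Set N.V :=
  {v | ∃ a ∈ l, v = N.tail a ∨ v = N.head a}

/-- `P i j` is a path from `s i` to `t j`, and for each sink `j` the `k`
paths `P · j` are pairwise arc-disjoint (strong reachability). -/
def IsStrongSystem (P : Fin k → Fin k → List N.A) : Prop :=
  (∀ i j, N.IsPathFrom (N.src i) (N.snk j) (P i j)) ∧
    ∀ (j i i' : Fin k), i ≠ i' → ∀ a : N.A, a ∈ P i j → a ∉ P i' j

/-- Extra strong reachability: in addition, for each sink `j`, two distinct
paths towards `t j` share no vertex other than `t j`. -/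
def IsExtraStrongSystem (P : Fin k → Fin k → List N.A) : Prop :=
  N.IsStrongSystem P ∧
    ∀ (j i i' : Fin k), i ≠ i' →
      ∀ v : N.V, v ∈ N.pathVerts (P i j) → v ∈ N.pathVerts (P i' j) → v = N.snk j

/-- Stability: the choice of the `k` pairwise arc-disjoint paths towards each
sink is unique. -/
def IsStableSystem (P : Fin k → Fin k → List N.A) : Prop :=
  N.IsStrongSystem P ∧
    ∀ (j : Fin k) (Q : Fin k → List N.A),
      (∀ i, N.IsPathFrom (N.src i) (N.snk j) (Q i)) →
      (∀ i i', i ≠ i' → ∀ a : N.A, a ∈ Q i → a ∉ Q i') →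
      ∀ i, Q i = P i j

/-- `excess_f(v) = Σ_{head a = v} f a − Σ_{tail a = v} f a`. -/
noncomputable def excess (f : N.A → ℝ) (v : N.V) : ℝ :=
  (∑ a : N.A, if N.head a = v then f a else 0) -
    (∑ a : N.A, if N.tail a = v then f a else 0)

/-- An `u`–`v` flow: zero excess away from `u` and `v`. -/
def IsFlow (u v : N.V) (f : N.A → ℝ) : Prop :=
  ∀ w : N.V, w ≠ u → w ≠ v → N.excess f w = 0

/-- The unit flow along a path: `1` on its arcs and `0` elsewhere. -/
noncomputable def unitFlow (l : List N.A) : N.A → ℝ :=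
  fun a => if a ∈ l then 1 else 0

/-- The set of source/sink index pairs whose path passes through the arc `a`. -/
def arcPattern (P : Fin k → Fin k → List N.A) (a : N.A) : Finset (Fin k × Fin k) :=
  Finset.univ.filter (fun q => a ∈ P q.1 q.2)

/-- `S_N`, the family of index-pair patterns of the arcs of `N`. -/
def SN (P : Fin k → Fin k → List N.A) : Set (Finset (Fin k × Fin k)) :=
  {T | ∃ a : N.A, T = N.arcPattern P a}

/-! ### Segments and longest common segments -/

/-- A segment: a start vertex together with a (possibly empty) chained list of
arcs starting there.  A segment with no arcs is a single vertex. -/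
def IsSeg (s : N.V × List N.A) : Prop :=
  s.2.Chain' (fun a b => N.head a = N.tail b) ∧ ∀ a ∈ s.2.head?, N.tail a = s.1

/-- The vertices of a segment. -/
def segVerts (s : N.V × List N.A) : Set N.V :=
  insert s.1 (N.pathVerts s.2)

/-- The final vertex of a segment. -/
def segEnd (s : N.V × List N.A) : N.V :=
  s.2.getLast?.elim s.1 N.head

/-- The segment `s` lies on the path `p`. -/
def SegOn (s : N.V × List N.A) (p : List N.A) : Prop :=
  s.2 <:+: p ∧ s.1 ∈ N.pathVerts p

/-- The segment `s` is contained in the segment `s'`. -/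
def SegLE (s s' : N.V × List N.A) : Prop :=
  s.2 <:+: s'.2 ∧ s.1 ∈ N.segVerts s'

/-- `s` is a longest common segment (l.c.s.) of the set of paths `ps`:
it is a segment common to all paths of `ps`, and no segment properly
containing it is common to all paths of `ps`. -/
def IsLCS (ps : Set (List N.A)) (s : N.V × List N.A) : Prop :=
  N.IsSeg s ∧ (∀ p ∈ ps, N.SegOn s p) ∧
    ∀ s' : N.V × List N.A, N.IsSeg s' → N.SegLE s s' → s' ≠ s →
      ∃ p ∈ ps, ¬ N.SegOn s' p

/-- `s` is an l.c.s. of some pair `{P i j₁, P i' j₂}` and lies on `p`. -/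
def IsPairLCSOn (P : Fin k → Fin k → List N.A) (j₁ j₂ : Fin k)
    (p : List N.A) (s : N.V × List N.A) : Prop :=
  (∃ i i' : Fin k, N.IsLCS {P i j₁, P i' j₂} s) ∧ N.SegOn s p

/-- `ℓ^{j₁,j₂}(p)`: the number of l.c.s.'s of pairs `{P i j₁, P i' j₂}` lying
on the path `p`. -/
noncomputable def lcsCount (P : Fin k → Fin k → List N.A) (j₁ j₂ : Fin k)
    (p : List N.A) : ℕ :=
  Nat.card {s : N.V × List N.A | N.IsPairLCSOn P j₁ j₂ p s}

/-- `m_{j₁,j₂}^c = {i : ℓ^{j₁,j₂}(P_{s_i,t_c}) = 1}`. -/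
def mset (P : Fin k → Fin k → List N.A) (j₁ j₂ c : Fin k) : Set (Fin k) :=
  {i | N.lcsCount P j₁ j₂ (P i c) = 1}

/-- `u` lies strictly before `v` along the path `p` (there is a nonempty
infix of `p` going from `u` to `v`). -/
def StrictlyBeforeOn (p : List N.A) (u v : N.V) : Prop :=
  ∃ l : List N.A, l <:+: p ∧ l.head?.map N.tail = some u ∧ l.getLast?.map N.head = some v

/-- `e 0, …, e (L-1)` enumerates, in the order along `p`, the l.c.s.'s
`p(1) < p(2) < ⋯ < p(L)` of pairs `{P i j₁, P i' j₂}` lying on `p`. -/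
def IsLCSEnum (P : Fin k → Fin k → List N.A) (j₁ j₂ : Fin k) (p : List N.A)
    (e : ℕ → N.V × List N.A) (L : ℕ) : Prop :=
  (∀ n, n < L → N.IsPairLCSOn P j₁ j₂ p (e n)) ∧
  (∀ s, N.IsPairLCSOn P j₁ j₂ p s → ∃ n, n < L ∧ e n = s) ∧
  (∀ m n, m < n → n < L → N.StrictlyBeforeOn p (N.segEnd (e m)) (e n).1)

/-! ### Residual networks, regular cycles, semi-cycles and crossings -/

/-- `a` is a `P_{t_j}`-arc. -/
def isPArc (P : Fin k → Fin k → List N.A) (j : Fin k) (a : N.A) : Prop :=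
  ∃ i, a ∈ P i j

/-- The tail of `a` in the `j`-th residual network `N_j` (in which all
`P_{t_j}`-arcs are reversed). -/
def rtail (P : Fin k → Fin k → List N.A) (j : Fin k) (a : N.A) : N.V :=
  if ∃ i, a ∈ P i j then N.head a else N.tail a

/-- The head of `a` in the `j`-th residual network `N_j`. -/
def rhead (P : Fin k → Fin k → List N.A) (j : Fin k) (a : N.A) : N.V :=
  if ∃ i, a ∈ P i j then N.tail a else N.head a

/-- `l` is a directed cycle of the residual network `N_j`. -/
def IsResidCycle (P : Fin k → Fin k → List N.A) (j : Fin k) (l : List N.A) : Prop :=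
  l ≠ [] ∧ l.Nodup ∧
  l.Chain' (fun a b => N.rhead P j a = N.rtail P j b) ∧
  (∀ a ∈ l.getLast?, ∀ b ∈ l.head?, N.rhead P j a = N.rtail P j b) ∧
  (l.map (N.rtail P j)).Nodup

/-- A regular cycle of `N_j`: a directed cycle of `N_j` having no isolated
vertex of `P_{t_j}`, i.e. every vertex of the cycle lying on a path of
`P_{t_j}` is incident in the cycle to some (reversed) `P_{t_j}`-arc. -/
def IsRegularCycle (P : Fin k → Fin k → List N.A) (j : Fin k) (l : List N.A) : Prop :=
  N.IsResidCycle P j l ∧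
    ∀ v ∈ l.map (N.rtail P j),
      (∃ i, v ∈ N.pathVerts (P i j)) →
      ∃ a ∈ l, N.isPArc P j a ∧ (v = N.tail a ∨ v = N.head a)

/-- A `P_{t_j}`-semi-cycle of `N`: the arc set of a regular cycle of `N_j`,
with the original orientations of `N` restored. -/
def IsSemiCycle (P : Fin k → Fin k → List N.A) (j : Fin k) (E : Set N.A) : Prop :=
  ∃ l : List N.A, N.IsRegularCycle P j l ∧ E = {a | a ∈ l}

/-- A `P_{t_j}`-crossing of `N`: a `P_{t_j}`-semi-cycle with all its
`P_{t_j}`-arcs removed. -/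
def IsCrossing (P : Fin k → Fin k → List N.A) (j : Fin k) (E : Set N.A) : Prop :=
  ∃ l : List N.A, N.IsRegularCycle P j l ∧ E = {a | a ∈ l ∧ ¬ N.isPArc P j a}

end KPairNetwork

/-
The excess is linear in the flow, and the unit flow along a path from `u` to `v` has excess
`[w = v] - [w = u]` at `w` (the sum telescopes along the path). Hence the excess of
`f l = Σ c l i j • f_{i,j}` at a sink `t_j` is the `j`-th column sum of `c l`, and at a source
`s_i` minus its `i`-th row sum; the row and column conditions make this `0` away from `s_l`, `t_l`
and `1` at `t_l`. On an arc `a`, `f l a` is `g^{(l)}_s(C)` for the pattern `s` of `a`, so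
feasibility is exactly the hypothesis `g_s(C) ≤ 1`.
-/

theorem List.sum_map_sub_sum_map_of_isChain {α M : Type*} [AddCommGroup M] {f g : α → M} :
    ∀ {l : List α}, l.IsChain (fun a b => f a = g b) →
      ∀ a₀ ∈ l.head?, ∀ a₁ ∈ l.getLast?, (l.map f).sum - (l.map g).sum = f a₁ - g a₀
  | [], _, _, h₀, _, _ => by simp at h₀
  | [a], _, a₀, h₀, a₁, h₁ => by
      obtain rfl : a = a₀ := by simpa using h₀
      obtain rfl : a = a₁ := by simpa using h₁
      simp
  | a :: b :: l, hc, a₀, h₀, a₁, h₁ => by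
      obtain rfl : a = a₀ := by simpa using h₀
      rw [List.isChain_cons_cons] at hc
      have ih := List.sum_map_sub_sum_map_of_isChain hc.2 b rfl a₁ (by simpa using h₁)
      simp only [List.map_cons, List.sum_cons] at ih ⊢
      rw [← sub_add_sub_cancel (f a₁) (g b) (g a), ← ih, ← hc.1]
      abel

theorem List.sum_ite_mem_eq_sum_map {α M : Type*} [Fintype α] [DecidableEq α] [AddCommMonoid M]
    {l : List α} (hl : l.Nodup) (F : α → M) :
    (∑ a, if a ∈ l then F a else 0) = (l.map F).sum := by
  rw [← Finset.sum_filter, ← List.sum_toFinset F hl]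
  congr
  ext
  simp

namespace KPairNetwork

variable {k : ℕ} (N : KPairNetwork k)

theorem nodup_of_isChain {l : List N.A} (hl : l.IsChain fun a b => N.head a = N.tail b) :
    l.Nodup := by
  obtain ⟨ord, hord⟩ := N.acyclic
  have hlt : (l.map fun a => ord (N.tail a)).IsChain (· < ·) :=
    List.isChain_map_of_isChain _ (fun a b h => h ▸ hord a) hl
  exact (List.isChain_iff_pairwise.mp hlt).nodup.of_map _

theorem excess_sum {ι : Type*} (s : Finset ι) (g : ι → N.A → ℝ) (w : N.V) :
    N.excess (fun a => ∑ x ∈ s, g x a) w = ∑ x ∈ s, N.excess (g x) w := by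
  simp only [excess, ← Finset.sum_filter, Finset.sum_sub_distrib]
  rw [Finset.sum_comm (s := Finset.filter _ _), Finset.sum_comm (s := Finset.filter _ _)]

theorem excess_const_mul (r : ℝ) (g : N.A → ℝ) (w : N.V) :
    N.excess (fun a => r * g a) w = r * N.excess g w := by
  simp only [excess, mul_sub, Finset.mul_sum, mul_ite, mul_zero]

theorem excess_unitFlow {u v : N.V} {l : List N.A} (hl : N.IsPathFrom u v l) (w : N.V) :
    N.excess (N.unitFlow l) w = (if w = v then 1 else 0) - (if w = u then 1 else 0) := by
  obtain ⟨hne, hchain, hfirst, hlast⟩ := hl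
  have hsum : ∀ t : N.A → N.V, (∑ a, if t a = w then N.unitFlow l a else 0)
      = (l.map fun a => if t a = w then (1 : ℝ) else 0).sum := by
    intro t
    rw [← List.sum_ite_mem_eq_sum_map (N.nodup_of_isChain hchain)]
    simp only [unitFlow, ← ite_and, and_comm]
  have h₀ := List.head?_eq_some_head hne
  have h₁ := List.getLast?_eq_some_getLast hne
  rw [excess, hsum, hsum, List.sum_map_sub_sum_map_of_isChain
    (hchain.imp fun a b h => by simp only [h]) _ h₀ _ h₁, hfirst _ h₀, hlast _ h₁]
  simp only [eq_comm]

theorem snk_ne_src_of_isPathFrom {u : N.V} {j : Fin k} {l : List N.A}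
    (hl : N.IsPathFrom u (N.snk j) l) (i : Fin k) : N.snk j ≠ N.src i := by
  obtain ⟨hne, -, -, hlast⟩ := hl
  rw [← hlast _ (List.getLast?_eq_some_getLast hne)]
  exact N.src_no_in i _

theorem excess_sum_mul_unitFlow {P : Fin k → Fin k → List N.A}
    (hP : ∀ i j, N.IsPathFrom (N.src i) (N.snk j) (P i j)) (M : Fin k → Fin k → ℝ) (w : N.V) :
    N.excess (fun a => ∑ i, ∑ j, M i j * N.unitFlow (P i j) a) w =
      (∑ j, if w = N.snk j then ∑ i, M i j else 0) - ∑ i, if w = N.src i then ∑ j, M i j else 0 := by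
  simp only [excess_sum, excess_const_mul, N.excess_unitFlow (hP _ _), mul_sub,
    Finset.sum_sub_distrib, mul_ite, mul_one, mul_zero]
  rw [Finset.sum_comm (f := fun i j => if w = N.snk j then M i j else 0)]
  simp only [Finset.sum_ite_irrel, Finset.sum_const_zero]

theorem sum_mul_unitFlow_eq_sum_arcPattern (P : Fin k → Fin k → List N.A)
    (M : Fin k → Fin k → ℝ) (a : N.A) :
    ∑ i, ∑ j, M i j * N.unitFlow (P i j) a = ∑ q ∈ N.arcPattern P a, M q.1 q.2 := by
  simp only [unitFlow, mul_ite, mul_one, mul_zero, arcPattern, Finset.sum_filter]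
  rw [← Finset.sum_product', Finset.univ_product_univ]

end KPairNetwork

/-- Theorem 2 of the paper: for a strongly reachable
`k`-pair network, if the coefficient tuple `C` satisfies the rate conditions
and `g_s(C) ≤ 1` for every `s ∈ S_N`, then the multi-flow
`f l = Σ_{i,j} c l i j • f_{i,j}` is a linear routing solution: each `f l` is
an `s l`–`t l` flow, the rate is `(1,…,1)`, and the multi-flow is feasible. -/
theorem statement1 {k : ℕ} (N : KPairNetwork k) (P : Fin k → Fin k → List N.A)
    (hP : N.IsStrongSystem P)
    (c : Fin k → Fin k → Fin k → ℝ)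
    (hrow : ∀ l i, i ≠ l → ∑ j : Fin k, c l i j = 0)
    (hcol : ∀ l j, j ≠ l → ∑ i : Fin k, c l i j = 0)
    (hsum : ∀ l, ∑ i : Fin k, ∑ j : Fin k, c l i j = 1)
    (hg : ∀ T ∈ N.SN P, ∑ l : Fin k, |∑ q ∈ T, c l q.1 q.2| ≤ 1)
    (f : Fin k → N.A → ℝ)
    (hf : ∀ l a, f l a = ∑ i : Fin k, ∑ j : Fin k, c l i j * N.unitFlow (P i j) a) :
    (∀ l, N.IsFlow (N.src l) (N.snk l) (f l)) ∧
    (∀ l, N.excess (f l) (N.snk l) = 1) ∧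
    ∀ a : N.A, ∑ l : Fin k, |f l a| ≤ 1 := by
  have hexcess : ∀ l w, N.excess (f l) w = (∑ j, if w = N.snk j then ∑ i, c l i j else 0) -
      ∑ i, if w = N.src i then ∑ j, c l i j else 0 := fun l w => by
    rw [show f l = _ from funext (hf l), N.excess_sum_mul_unitFlow hP.1]
  refine ⟨fun l w hws hwt => ?_, fun l => ?_, fun a => ?_⟩
  · rw [hexcess, sub_eq_zero]
    rw [Finset.sum_eq_zero fun j _ => ite_eq_right_iff.mpr fun h => hcol l j ?_,
      Finset.sum_eq_zero fun i _ => ite_eq_right_iff.mpr fun h => hrow l i ?_]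
    · rintro rfl; exact hws h
    · rintro rfl; exact hwt h
  · have hdiag : ∑ i, c l i l = 1 := by
      rw [← hsum l, Finset.sum_comm, Finset.sum_eq_single l fun j _ hj => hcol l j hj]
      simp
    have hnot_src : ∀ i, N.snk l ≠ N.src i := N.snk_ne_src_of_isPathFrom (hP.1 l l)
    simp only [hexcess, N.snk_inj.eq_iff, Finset.sum_ite_eq, Finset.mem_univ, if_true, hnot_src,
      if_false, Finset.sum_const_zero, sub_zero, hdiag]
  · simpa only [hf, N.sum_mul_unitFlow_eq_sum_arcPattern] using hg _ ⟨a, rfl⟩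
end

section
/- Let N be a stable 3-pair network with fixed paths r_i = P_{s_i,t_1} and g_i = P_{s_i,t_2} (i = 1,2,3), let p, q ∈ {r_1, r_2, r_3, g_1, g_2, g_3} with p ≠ q, and let 1 ≤ n ≤ ℓ(p) − 1. If the l.c.s. p(n) is contained in q, then p(n+1) is not contained in q. -/
open scoped BigOperators

/-!
Let `v` be the end of `p(n)` and `w` the start of `p(n+1)`; the part of `p` from `v` to `w` is a
nonempty walk. In a stable system two paths towards the same sink meet only at that sink, since
exchanging their final segments at a common vertex would give a second system; this settles the
case where `q` ends at the sink of `p`, because `v` lies on both and has an outgoing arc.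
Otherwise, replacing the part of `q` between `v` and `w` by that of `p` would give another path
towards the sink of `q`, so by stability some arc of the middle part of `p` lies on a path towards
that sink. The l.c.s. through this arc is then an l.c.s. on `p` strictly between `p(n)` and
`p(n+1)`.
-/

namespace KPairNetwork

variable {k : ℕ} {N : KPairNetwork k}

def IsWalk (N : KPairNetwork k) (u v : N.V) (l : List N.A) : Prop :=
  N.IsSeg (u, l) ∧ N.segEnd (u, l) = v

section Walks

variable {u v w z : N.V} {a : N.A} {l l₁ l₂ : List N.A}

lemma isWalk_nil : N.IsWalk u v [] ↔ u = v :=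
  ⟨fun h => h.2, fun h => ⟨⟨List.IsChain.nil, by simp⟩, h⟩⟩

lemma segEnd_cons (u : N.V) (a : N.A) (l : List N.A) :
    N.segEnd (u, a :: l) = N.segEnd (N.head a, l) := by
  cases l <;> simp [segEnd, List.getLast?_cons]

lemma isWalk_cons : N.IsWalk u v (a :: l) ↔ N.tail a = u ∧ N.IsWalk (N.head a) v l := by
  rw [IsWalk, IsWalk, segEnd_cons]
  constructor
  · rintro ⟨⟨hc, hu⟩, he⟩
    obtain ⟨h₁, h₂⟩ := List.isChain_cons.1 hc
    exact ⟨hu a rfl, ⟨h₂, fun b hb => (h₁ b hb).symm⟩, he⟩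
  · rintro ⟨rfl, ⟨hc, hh⟩, he⟩
    refine ⟨⟨List.isChain_cons.2 ⟨fun b hb => (hh b hb).symm, hc⟩, ?_⟩, he⟩
    rintro b ⟨⟩
    rfl

lemma isPathFrom_iff : N.IsPathFrom u v l ↔ l ≠ [] ∧ N.IsWalk u v l := by
  cases l <;> simp [IsPathFrom, IsWalk, IsSeg, segEnd, List.getLast?_cons, and_assoc]

lemma IsSeg.isWalk {s : N.V × List N.A} (hs : N.IsSeg s) : N.IsWalk s.1 (N.segEnd s) s.2 :=
  ⟨hs, rfl⟩

lemma IsWalk.append (h₁ : N.IsWalk u v l₁) (h₂ : N.IsWalk v w l₂) :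
    N.IsWalk u w (l₁ ++ l₂) := by
  induction l₁ generalizing u with
  | nil => rwa [isWalk_nil.1 h₁]
  | cons b t ih =>
    rw [isWalk_cons] at h₁
    rw [List.cons_append, isWalk_cons]
    exact ⟨h₁.1, ih h₁.2⟩

lemma segVerts_cons (u : N.V) (a : N.A) (l : List N.A) :
    N.segVerts (u, a :: l) = insert u (insert (N.tail a) (N.segVerts (N.head a, l))) := by
  ext x
  simp [segVerts, pathVerts, or_assoc]

lemma IsWalk.exists_split (h : N.IsWalk u v l) (hz : z ∈ N.segVerts (u, l)) :
    ∃ l₁ l₂, l = l₁ ++ l₂ ∧ N.IsWalk u z l₁ ∧ N.IsWalk z v l₂ := by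
  induction l generalizing u with
  | nil =>
    obtain rfl : z = u := by simpa [segVerts, pathVerts] using hz
    exact ⟨[], [], rfl, isWalk_nil.2 rfl, h⟩
  | cons b t ih =>
    rw [isWalk_cons] at h
    rw [segVerts_cons, h.1, Set.insert_idem] at hz
    rcases hz with rfl | hz
    · exact ⟨[], b :: t, rfl, isWalk_nil.2 rfl, isWalk_cons.2 h⟩
    · obtain ⟨l₁, l₂, rfl, h₁, h₂⟩ := ih h.2 hz
      exact ⟨b :: l₁, l₂, rfl, isWalk_cons.2 ⟨h.1, h₁⟩, h₂⟩

lemma IsWalk.ne_snk (h : N.IsWalk u v l) (hl : l ≠ []) (c : Fin k) : u ≠ N.snk c := by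
  obtain ⟨b, t, rfl⟩ := List.exists_cons_of_ne_nil hl
  rw [← (isWalk_cons.1 h).1]
  exact N.snk_no_out c b

section Order

variable {ord : N.V → ℕ}

lemma IsWalk.ord_le (hord : ∀ a, ord (N.tail a) < ord (N.head a)) (h : N.IsWalk u v l) :
    ord u ≤ ord v := by
  induction l generalizing u with
  | nil => rw [isWalk_nil.1 h]
  | cons b t ih =>
    obtain ⟨rfl, ht⟩ := isWalk_cons.1 h
    exact (hord b).le.trans (ih ht)

lemma IsWalk.ord_le_of_mem (hord : ∀ a, ord (N.tail a) < ord (N.head a))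
    (h : N.IsWalk u v l) (ha : a ∈ l) : ord u ≤ ord (N.tail a) ∧ ord (N.head a) ≤ ord v := by
  induction l generalizing u with
  | nil => cases ha
  | cons b t ih =>
    obtain ⟨rfl, ht⟩ := isWalk_cons.1 h
    rcases List.mem_cons.1 ha with rfl | ha
    · exact ⟨le_rfl, ht.ord_le hord⟩
    · have := ih ht ha
      exact ⟨(hord b).le.trans this.1, this.2⟩

lemma IsWalk.ord_lt (hord : ∀ a, ord (N.tail a) < ord (N.head a)) (h : N.IsWalk u v l)
    (hl : l ≠ []) : ord u < ord v := by
  obtain ⟨a, ha⟩ := List.exists_mem_of_ne_nil l hl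
  have := h.ord_le_of_mem hord ha
  exact this.1.trans_lt ((hord a).trans_le this.2)

end Order

lemma IsWalk.nodup (h : N.IsWalk u v l) : l.Nodup := by
  obtain ⟨ord, hord⟩ := N.acyclic
  induction l generalizing u with
  | nil => exact List.nodup_nil
  | cons b t ih =>
    obtain ⟨rfl, ht⟩ := isWalk_cons.1 h
    refine List.nodup_cons.2 ⟨fun hb => ?_, ih ht⟩
    exact (hord b).not_ge (ht.ord_le_of_mem hord hb).1

lemma StrictlyBeforeOn.exists_isWalk {p : List N.A} (hp : N.IsPathFrom u v p)
    (h : N.StrictlyBeforeOn p w z) : ∃ l, l <:+: p ∧ l ≠ [] ∧ N.IsWalk w z l := by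
  obtain ⟨l, hlp, hw, hz⟩ := h
  obtain ⟨b, hb, rfl⟩ := Option.map_eq_some_iff.1 hw
  obtain ⟨c, hc, rfl⟩ := Option.map_eq_some_iff.1 hz
  refine ⟨l, hlp, List.ne_nil_of_mem (List.mem_of_mem_head? hb), ⟨hp.2.1.infix hlp, ?_⟩, ?_⟩
  · intro a ha
    rw [Option.mem_def.1 ha] at hb
    cases hb; rfl
  · simp [segEnd, Option.mem_def.1 hc]

lemma SegOn.segEnd_mem {s : N.V × List N.A} {p : List N.A} (h : N.SegOn s p) :
    N.segEnd s ∈ N.pathVerts p := by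
  cases hs : s.2.getLast? with
  | none => simpa [segEnd, hs] using h.2
  | some b => exact ⟨b, h.1.subset (List.mem_of_mem_getLast? hs), Or.inr (by simp [segEnd, hs])⟩

end Walks

section Stable

variable {P : Fin k → Fin k → List N.A}

lemma IsStableSystem.eq_of_isPathFrom (hP : N.IsStableSystem P) {i j : Fin k} {Q : List N.A}
    (hQ : N.IsPathFrom (N.src i) (N.snk j) Q) (hQP : ∀ x, x ≠ i → ∀ a ∈ Q, a ∉ P x j) :
    Q = P i j := by
  classical
  have := hP.2 j (fun x => if x = i then Q else P x j) (fun x => by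
    split_ifs with hx
    · exact hx ▸ hQ
    · exact hP.1.1 x j) (fun x y hxy a hx hy => by
    split_ifs at hx hy with h₁ h₂ h₂
    · exact hxy (h₁.trans h₂.symm)
    · exact hQP y h₂ a hx hy
    · exact hQP x h₁ a hy hx
    · exact hP.1.2 j x y hxy a hx hy) i
  simpa using this

lemma IsStableSystem.eq_of_swap (hP : N.IsStableSystem P) {j i i' : Fin k} (hii : i ≠ i')
    {Q Q' : List N.A} (hQ : N.IsPathFrom (N.src i) (N.snk j) Q)
    (hQ' : N.IsPathFrom (N.src i') (N.snk j) Q') (hQQ' : ∀ a ∈ Q, a ∉ Q')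
    (hsub : ∀ a ∈ Q, a ∈ P i j ∨ a ∈ P i' j) (hsub' : ∀ a ∈ Q', a ∈ P i j ∨ a ∈ P i' j) :
    Q = P i j := by
  classical
  have hother : ∀ x, x ≠ i → x ≠ i' → ∀ a, a ∈ P i j ∨ a ∈ P i' j → a ∉ P x j := by
    rintro x hxi hxi' a (ha | ha)
    exacts [hP.1.2 j i x (Ne.symm hxi) a ha, hP.1.2 j i' x (Ne.symm hxi') a ha]
  have := hP.2 j (fun x => if x = i then Q else if x = i' then Q' else P x j) (fun x => by
    split_ifs with h₁ h₂
    · exact h₁ ▸ hQ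
    · exact h₂ ▸ hQ'
    · exact hP.1.1 x j) (fun x y hxy a hx hy => by
    split_ifs at hx hy with h₁ h₂ h₃ h₄ h₃ h₄ h₃ h₄ <;> subst_vars
    all_goals first
      | exact hxy rfl
      | exact hQQ' a hx hy
      | exact hQQ' a hy hx
      | exact hother _ ‹_› ‹_› a (hsub a hx) hy
      | exact hother _ ‹_› ‹_› a (hsub' a hx) hy
      | exact hother _ ‹_› ‹_› a (hsub a hy) hx
      | exact hother _ ‹_› ‹_› a (hsub' a hy) hx
      | exact hP.1.2 j _ _ hxy a hx hy) i
  simpa using this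

theorem IsStableSystem.isExtraStrongSystem (hP : N.IsStableSystem P) :
    N.IsExtraStrongSystem P := by
  refine ⟨hP.1, fun j i i' hii v hv hv' => by_contra fun hvt => ?_⟩
  have hp := (isPathFrom_iff.1 (hP.1.1 i j)).2
  have hq := (isPathFrom_iff.1 (hP.1.1 i' j)).2
  obtain ⟨p₁, p₂, hpe, hp₁, hp₂⟩ := hp.exists_split (Set.mem_insert_of_mem _ hv)
  obtain ⟨q₁, q₂, hqe, hq₁, hq₂⟩ := hq.exists_split (Set.mem_insert_of_mem _ hv')
  have hq₂ne : q₂ ≠ [] := by rintro rfl; exact hvt (isWalk_nil.1 hq₂)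
  have hp₂ne : p₂ ≠ [] := by rintro rfl; exact hvt (isWalk_nil.1 hp₂)
  have hdisj : ∀ a ∈ P i j, a ∉ P i' j := hP.1.2 j i i' hii
  have hpn := hpe ▸ hp.nodup
  have hqn := hqe ▸ hq.nodup
  rw [List.nodup_append] at hpn hqn
  rw [hpe, hqe] at hdisj
  have hswap : p₁ ++ q₂ = P i j := by
    refine hP.eq_of_swap hii (isPathFrom_iff.2 ⟨by simp [hq₂ne], hp₁.append hq₂⟩)
      (isPathFrom_iff.2 ⟨by simp [hp₂ne], hq₁.append hp₂⟩) ?_ ?_ ?_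
    · intro a ha ha'
      simp only [List.mem_append] at ha ha' hdisj
      rcases ha with ha | ha <;> rcases ha' with ha' | ha'
      · exact hdisj a (.inl ha) (.inl ha')
      · exact hpn.2.2 a ha a ha' rfl
      · exact hqn.2.2 a ha' a ha rfl
      · exact hdisj a (.inr ha') (.inr ha)
    all_goals
      rw [hpe, hqe]
      intro a ha
      simp only [List.mem_append] at ha ⊢
      tauto
  rw [hpe, List.append_cancel_left_eq] at hswap
  obtain ⟨a, ha⟩ := List.exists_mem_of_ne_nil q₂ hq₂ne
  exact hdisj a (List.mem_append_right _ (hswap ▸ ha)) (List.mem_append_right _ ha)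

lemma IsStableSystem.exists_mem_of_isWalk (hP : N.IsStableSystem P) {i j : Fin k}
    {u w : N.V} {l : List N.A} (hu : u ∈ N.pathVerts (P i j)) (hw : w ∈ N.pathVerts (P i j))
    (hl : N.IsWalk u w l) (hne : l ≠ []) : ∃ a ∈ l, ∃ x, a ∈ P x j := by
  by_contra! hfree
  have hp := (isPathFrom_iff.1 (hP.1.1 i j)).2
  obtain ⟨q₁, _, hq, hq₁, -⟩ := hp.exists_split (Set.mem_insert_of_mem _ hu)
  obtain ⟨_, q₂, hq', -, hq₂⟩ := hp.exists_split (Set.mem_insert_of_mem _ hw)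
  have hreroute := hP.eq_of_isPathFrom
    (isPathFrom_iff.2 ⟨by simp [hne], (hq₁.append hl).append hq₂⟩) (fun x hx a ha => by
      simp only [List.mem_append] at ha
      rcases ha with (ha | ha) | ha
      · exact hP.1.2 j i x hx.symm a (hq ▸ List.mem_append_left _ ha)
      · exact hfree a ha x
      · exact hP.1.2 j i x hx.symm a (hq' ▸ List.mem_append_right _ ha))
  obtain ⟨a, ha⟩ := List.exists_mem_of_ne_nil l hne
  exact hfree a ha i (hreroute ▸ by simp [ha])

end Stable

lemma exists_isLCS_of_forall_mem {ps : Set (List N.A)} {p₀ : List N.A} (hp₀ : p₀ ∈ ps)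
    {z : N.A} (hz : ∀ p ∈ ps, z ∈ p) : ∃ S, N.IsLCS ps S ∧ z ∈ S.2 := by
  let C : Set (N.V × List N.A) := {s | N.IsSeg s ∧ (∀ p ∈ ps, N.SegOn s p) ∧ z ∈ s.2}
  have hzC : (N.tail z, [z]) ∈ C := ⟨⟨List.isChain_singleton z, by simp⟩,
    fun p hp => ⟨(List.singleton_infix_iff z p).2 (hz p hp), z, hz p hp, .inl rfl⟩, by simp⟩
  -- a common segment through `z` of maximal length
  obtain ⟨S, hS, hmax⟩ :=
    (measure fun s : N.V × List N.A => p₀.length - s.2.length).wf.has_min C ⟨_, hzC⟩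
  refine ⟨S, ⟨hS.1, hS.2.1, fun s' hs' hle hne => ?_⟩, hS.2.2⟩
  by_contra! hcon
  apply hne
  have hlen : s'.2.length ≤ S.2.length := by
    have h₁ := hmax s' ⟨hs', hcon, hle.1.subset hS.2.2⟩
    have h₂ := (hcon p₀ hp₀).1.length_le
    change ¬ p₀.length - s'.2.length < p₀.length - S.2.length at h₁
    omega
  have hlist : S.2 = s'.2 := hle.1.sublist.eq_of_length_le hlen
  obtain ⟨b, t, hbt⟩ := List.exists_cons_of_ne_nil (List.ne_nil_of_mem hS.2.2)
  have hstart : s'.1 = S.1 := by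
    rw [← hs'.2 b (by simp [← hlist, hbt]), ← hS.1.2 b (by simp [hbt])]
  exact Prod.ext hstart hlist.symm

lemma isLCS_pair_of_ne {P : Fin k → Fin k → List N.A} {j₁ j₂ c c' i i' : Fin k}
    (hc : c = j₁ ∨ c = j₂) (hc' : c' = j₁ ∨ c' = j₂) (hcc' : c ≠ c') {S : N.V × List N.A}
    (hS : N.IsLCS {P i c, P i' c'} S) : ∃ x y, N.IsLCS {P x j₁, P y j₂} S := by
  rcases hc with rfl | rfl <;> rcases hc' with rfl | rfl
  · exact absurd rfl hcc'
  · exact ⟨i, i', hS⟩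
  · exact ⟨i', i, Set.pair_comm (P i c) (P i' c') ▸ hS⟩
  · exact absurd rfl hcc'

lemma IsLCSEnum.not_mem_of_isWalk {P : Fin k → Fin k → List N.A} {j₁ j₂ : Fin k}
    {p : List N.A} {u v : N.V} (hp : N.IsPathFrom u v p) {e : ℕ → N.V × List N.A} {L n : ℕ}
    (he : N.IsLCSEnum P j₁ j₂ p e L) (hn : n + 1 < L) {l : List N.A}
    (hl : N.IsWalk (N.segEnd (e n)) (e (n + 1)).1 l) {S : N.V × List N.A}
    (hS : N.IsPairLCSOn P j₁ j₂ p S) {z : N.A} (hzl : z ∈ l) : z ∉ S.2 := by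
  intro hzS
  obtain ⟨ord, hord⟩ := N.acyclic
  obtain ⟨m, hm, rfl⟩ := he.2.1 S hS
  have hwalk : ∀ m < L, N.IsWalk (e m).1 (N.segEnd (e m)) (e m).2 := fun m hm => by
    obtain ⟨⟨_, _, h⟩, -⟩ := he.1 m hm
    exact h.1.isWalk
  have hbefore : ∀ m m', m < m' → m' < L → ord (N.segEnd (e m)) < ord (e m').1 := by
    intro m m' h h'
    obtain ⟨l', -, hne, hl'⟩ := (he.2.2 m m' h h').exists_isWalk hp
    exact hl'.ord_lt hord hne
  obtain ⟨hSz₁, hSz₂⟩ := (hwalk m hm).ord_le_of_mem hord hzS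
  obtain ⟨hlz₁, hlz₂⟩ := hl.ord_le_of_mem hord hzl
  have hz := hord z
  have hn₀ := (hwalk n (by omega)).ord_le hord
  have hn₁ := (hwalk (n + 1) hn).ord_le hord
  rcases lt_trichotomy m n with h | rfl | h
  · have := hbefore m n h (by omega)
    omega
  · omega
  · obtain rfl | h' : m = n + 1 ∨ n + 1 < m := by omega
    · omega
    · have := hbefore (n + 1) m h' hm
      omega

lemma exists_src_snk_of_mem {N : KPairNetwork 3} {P : Fin 3 → Fin 3 → List N.A} {p : List N.A}
    (hp : p ∈ ({P 0 0, P 1 0, P 2 0, P 0 1, P 1 1, P 2 1} : Set (List N.A))) :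
    ∃ i c, (c = 0 ∨ c = 1) ∧ p = P i c := by
  simp only [Set.mem_insert_iff, Set.mem_singleton_iff] at hp
  rcases hp with h | h | h | h | h | h <;> exact ⟨_, _, by decide, h⟩

end KPairNetwork

open KPairNetwork

/-- Lemma 3 of the paper: in a stable 3-pair network, for
paths `p ≠ q` among `r_1, r_2, r_3, g_1, g_2, g_3` (where `r i = P i t₁`,
`g i = P i t₂`), if the `n`-th l.c.s. `p(n)` on `p` is contained in `q`, then
`p(n+1)` is not contained in `q`.  (Here `e` enumerates, in order along `p`,
the l.c.s.'s of pairs `{r_i, g_j}` lying on `p`; indices are 0-based.) -/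
theorem statement3 (N : KPairNetwork 3) (P : Fin 3 → Fin 3 → List N.A)
    (hP : N.IsStableSystem P)
    (p q : List N.A)
    (hp : p ∈ ({P 0 0, P 1 0, P 2 0, P 0 1, P 1 1, P 2 1} : Set (List N.A)))
    (hq : q ∈ ({P 0 0, P 1 0, P 2 0, P 0 1, P 1 1, P 2 1} : Set (List N.A)))
    (hpq : p ≠ q)
    (e : ℕ → N.V × List N.A) (L : ℕ)
    (he : N.IsLCSEnum P 0 1 p e L)
    (n : ℕ) (hn : n + 1 < L)
    (hon : N.SegOn (e n) q) :
    ¬ N.SegOn (e (n + 1)) q := by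
  intro hon'
  obtain ⟨ip, cp, hcp, rfl⟩ := exists_src_snk_of_mem hp
  obtain ⟨iq, cq, hcq, rfl⟩ := exists_src_snk_of_mem hq
  have hpath := hP.1.1 ip cp
  obtain ⟨mid, hmid_p, hmid_ne, hmid⟩ :=
    (he.2.2 n (n + 1) n.lt_succ_self hn).exists_isWalk hpath
  have hv : N.segEnd (e n) ∈ N.pathVerts (P iq cq) := hon.segEnd_mem
  rcases eq_or_ne cp cq with rfl | hcc
  · have hiq : ip ≠ iq := by rintro rfl; exact hpq rfl
    exact hmid.ne_snk hmid_ne cp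
      (hP.isExtraStrongSystem.2 cp ip iq hiq _ (he.1 n (by omega)).2.segEnd_mem hv)
  · obtain ⟨z, hz, i, hzi⟩ := hP.exists_mem_of_isWalk hv hon'.2 hmid hmid_ne
    obtain ⟨S, hS, hzS⟩ := exists_isLCS_of_forall_mem (ps := {P ip cp, P i cq})
      (Set.mem_insert _ _) (z := z) (by simp [hmid_p.subset hz, hzi])
    exact he.not_mem_of_isWalk hpath hn hmid
      ⟨isLCS_pair_of_ne hcp hcq hcc hS, hS.2.1 _ (Set.mem_insert _ _)⟩ hz hzS
end

section
/- Let N be a stable 3-pair network. If there exist an index h ∈ {1,2,3} and pairwise distinct i, j, l ∈ {1,2,3} such that h ∈ m_{i,j}^{l_1} ∩ m_{i,l}^{l_2} ∩ m_{j,l}^{l_3} for some l_1 ∈ {i,j}, l_2 ∈ {i,l}, l_3 ∈ {j,l}, then either {(h,i),(h,j)} ∉ S_N or {(h,i),(h,l)} ∉ S_N. -/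
open scoped BigOperators

/-!
Suppose arcs `a` and `b` realise the patterns `{(h,i),(h,j)}` and `{(h,i),(h,l)}`.
If `ℓ^{i,j}(P_{s_h,t_{l₁}}) = 1`, the l.c.s. of `P_{s_h,t_i}` and `P_{s_h,t_j}` through
`s_h` and the one through `a` are the same segment; since nothing enters a source, it is
an initial segment of both paths. So `a` lies on a common prefix `σ` of `P_{s_h,t_i}` and
`P_{s_h,t_j}`, and likewise `b` on a common prefix `τ` of `P_{s_h,t_i}` and `P_{s_h,t_l}`.
Two prefixes of `P_{s_h,t_i}` are comparable: if `σ ⊆ τ` then `a` lies on `P_{s_h,t_l}`,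
otherwise `b` lies on `P_{s_h,t_j}`, and either contradicts the pattern.
-/

theorem List.IsChain.prefix_of_cons_infix {α : Type*} {R : α → α → Prop} {a : α}
    {m l : List α} (hl : l.IsChain R) (ha : ∀ x, ¬ R x a) (h : a :: m <:+: l) :
    a :: m <+: l := by
  obtain ⟨u, t, rfl⟩ := h
  rcases u.eq_nil_or_concat with rfl | ⟨u, b, rfl⟩
  · exact ⟨t, rfl⟩
  · rw [List.concat_eq_append,
      show u ++ [b] ++ a :: m ++ t = u ++ b :: a :: (m ++ t) by simp] at hl
    exact absurd (List.isChain_append_cons_cons.1 hl).2.1 (ha b)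

namespace KPairNetwork

variable {k : ℕ} (N : KPairNetwork k)

theorem mem_iff_of_arcPattern_eq {P : Fin k → Fin k → List N.A} {a : N.A}
    {T : Finset (Fin k × Fin k)} (hT : T = N.arcPattern P a) (q : Fin k × Fin k) :
    a ∈ P q.1 q.2 ↔ q ∈ T := by
  simp [hT, arcPattern]

theorem src_mem_pathVerts {i : Fin k} {v : N.V} {p : List N.A}
    (hp : N.IsPathFrom (N.src i) v p) : N.src i ∈ N.pathVerts p := by
  obtain ⟨hne, -, hstart, -⟩ := hp
  obtain ⟨a, p', rfl⟩ := List.exists_cons_of_ne_nil hne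
  exact ⟨a, List.mem_cons_self, Or.inl (hstart a rfl).symm⟩

theorem pathVerts_mono {l l' : List N.A} (h : l <:+: l') :
    N.pathVerts l ⊆ N.pathVerts l' := by
  rintro v ⟨a, ha, hv⟩
  exact ⟨a, h.subset ha, hv⟩

theorem segLE_refl (s : N.V × List N.A) : N.SegLE s s :=
  ⟨List.infix_refl _, Set.mem_insert _ _⟩

theorem segLE_trans {s₁ s₂ s₃ : N.V × List N.A} (h₁₂ : N.SegLE s₁ s₂)
    (h₂₃ : N.SegLE s₂ s₃) : N.SegLE s₁ s₃ := by
  refine ⟨h₁₂.1.trans h₂₃.1, ?_⟩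
  rcases Set.mem_insert_iff.1 h₁₂.2 with h | h
  · exact h ▸ h₂₃.2
  · exact Set.mem_insert_of_mem _ (N.pathVerts_mono h₂₃.1 h)

theorem eq_of_segLE_of_length_le {s s' : N.V × List N.A} (hs : N.IsSeg s)
    (hs' : N.IsSeg s') (hle : N.SegLE s s') (hlen : s'.2.length ≤ s.2.length) :
    s' = s := by
  have harcs : s.2 = s'.2 := hle.1.eq_of_length (le_antisymm hle.1.length_le hlen)
  refine Prod.ext ?_ harcs.symm
  rcases hcases : s.2 with _ | ⟨a₀, m⟩
  · have hnil : s'.2 = [] := harcs ▸ hcases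
    rcases Set.mem_insert_iff.1 hle.2 with h | ⟨a, ha, -⟩
    · exact h.symm
    · simp [hnil] at ha
  · rw [← hs.2 a₀ (by simp [hcases]), ← hs'.2 a₀ (by simp [← harcs, hcases])]

theorem exists_isLCS_segLE {ps : Set (List N.A)} {p₀ : List N.A} (hp₀ : p₀ ∈ ps)
    {s : N.V × List N.A} (hs : N.IsSeg s) (hon : ∀ p ∈ ps, N.SegOn s p) :
    ∃ s', N.IsLCS ps s' ∧ N.SegLE s s' := by
  set C : Set (N.V × List N.A) :=
    {s' | N.IsSeg s' ∧ N.SegLE s s' ∧ ∀ p ∈ ps, N.SegOn s' p}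
  have hC : s ∈ C := ⟨hs, N.segLE_refl s, hon⟩
  have hbdd : BddAbove ((fun s' => s'.2.length) '' C) :=
    ⟨p₀.length, by rintro _ ⟨s', hs', rfl⟩; exact (hs'.2.2 p₀ hp₀).1.length_le⟩
  obtain ⟨s', hs'C, hs'max⟩ := Nat.sSup_mem ⟨_, Set.mem_image_of_mem _ hC⟩ hbdd
  refine ⟨s', ⟨hs'C.1, hs'C.2.2, fun s'' hs'' hle hne => ?_⟩, hs'C.2.1⟩
  by_contra! hon''
  have hlen : s''.2.length ≤ s'.2.length :=
    (le_csSup hbdd ⟨s'', ⟨hs'', N.segLE_trans hs'C.2.1 hle, hon''⟩, rfl⟩).trans_eq hs'max.symm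
  exact hne (N.eq_of_segLE_of_length_le hs'C.1 hs'' hle hlen)

/-- No arc enters a source, so a segment of a path through its source is an initial segment. -/
theorem prefix_of_src_mem_segVerts {i : Fin k} {p : List N.A} {s : N.V × List N.A}
    (hp : p.IsChain (fun a b => N.head a = N.tail b)) (hs : N.IsSeg s) (hsp : s.2 <:+: p)
    (hsrc : N.src i ∈ N.segVerts s) : s.2 <+: p := by
  have no_arc_into : ∀ {a}, N.tail a = N.src i → ∀ x, ¬ N.head x = N.tail a :=
    fun ha x hx => N.src_no_in i x (hx.trans ha)
  rcases hcases : s.2 with _ | ⟨a₀, m⟩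
  · exact List.nil_prefix
  have hstart : N.tail a₀ = N.src i := by
    rcases Set.mem_insert_iff.1 hsrc with h | ⟨a, ha, h | h⟩
    · rw [hs.2 a₀ (by simp [hcases]), h]
    · obtain ⟨m₁, m₂, hm⟩ := List.append_of_mem ha
      have hpre : a :: m₂ <+: a₀ :: m :=
        hcases ▸ hs.1.prefix_of_cons_infix (no_arc_into h.symm) ⟨m₁, [], by simp [hm]⟩
      rw [← (List.cons_prefix_cons.1 hpre).1, h]
    · exact absurd h.symm (N.src_no_in i a)
  exact hp.prefix_of_cons_infix (no_arc_into hstart) (hcases ▸ hsp)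

theorem exists_common_prefix_of_lcsCount_eq_one {P : Fin k → Fin k → List N.A}
    {h j₁ j₂ c : Fin k} {v₁ v₂ : N.V} (hp₁ : N.IsPathFrom (N.src h) v₁ (P h j₁))
    (hp₂ : N.IsPathFrom (N.src h) v₂ (P h j₂)) (hc : c = j₁ ∨ c = j₂)
    (hcount : N.lcsCount P j₁ j₂ (P h c) = 1) :
    ∃ σ : List N.A, σ <+: P h j₁ ∧ σ <+: P h j₂ ∧ ∀ a ∈ P h j₁, a ∈ P h j₂ → a ∈ σ := by
  set ps : Set (List N.A) := {P h j₁, P h j₂}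
  have hmem₁ : P h j₁ ∈ ps := Set.mem_insert _ _
  have hmem₂ : P h j₂ ∈ ps := Set.mem_insert_of_mem _ rfl
  have hunique : ∀ s s', N.IsLCS ps s → N.IsLCS ps s' → s = s' := by
    have hon : ∀ s, N.IsLCS ps s → N.IsPairLCSOn P j₁ j₂ (P h c) s := fun s hs =>
      ⟨⟨h, h, hs⟩, hs.2.1 _ (by rcases hc with rfl | rfl <;> assumption)⟩
    have : Subsingleton {s // N.IsPairLCSOn P j₁ j₂ (P h c) s} :=
      (Nat.card_eq_one_iff_unique.1 hcount).1
    exact fun s s' hs hs' =>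
      congrArg Subtype.val (Subsingleton.elim ⟨s, hon s hs⟩ ⟨s', hon s' hs'⟩)
  obtain ⟨S, hS, hsrc⟩ := N.exists_isLCS_segLE hmem₁ (s := (N.src h, []))
    ⟨List.isChain_nil, by simp⟩ (by
      rintro p (rfl | rfl)
      exacts [⟨List.nil_infix, N.src_mem_pathVerts hp₁⟩,
        ⟨List.nil_infix, N.src_mem_pathVerts hp₂⟩])
  refine ⟨S.2, N.prefix_of_src_mem_segVerts hp₁.2.1 hS.1 (hS.2.1 _ hmem₁).1 hsrc.2,
    N.prefix_of_src_mem_segVerts hp₂.2.1 hS.1 (hS.2.1 _ hmem₂).1 hsrc.2, fun a ha₁ ha₂ => ?_⟩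
  obtain ⟨Sa, hSa, ha⟩ := N.exists_isLCS_segLE hmem₁ (s := (N.tail a, [a]))
    ⟨List.isChain_singleton a, by simp⟩ (by
      rintro p (rfl | rfl)
      exacts [⟨(List.singleton_infix_iff _ _).2 ha₁, a, ha₁, Or.inl rfl⟩,
        ⟨(List.singleton_infix_iff _ _).2 ha₂, a, ha₂, Or.inl rfl⟩])
  rw [hunique S Sa hS hSa]
  exact ha.1.subset (List.mem_singleton_self a)

end KPairNetwork

theorem statement9_general (N : KPairNetwork 3) (P : Fin 3 → Fin 3 → List N.A)
    (hP : N.IsStableSystem P)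
    (h i j l : Fin 3) (hij : i ≠ j) (hil : i ≠ l) (hjl : j ≠ l)
    (l₁ l₂ : Fin 3)
    (hl₁ : l₁ = i ∨ l₁ = j) (hl₂ : l₂ = i ∨ l₂ = l)
    (hh₁ : h ∈ N.mset P i j l₁) (hh₂ : h ∈ N.mset P i l l₂) :
    ({(h, i), (h, j)} : Finset (Fin 3 × Fin 3)) ∉ N.SN P ∨
      ({(h, i), (h, l)} : Finset (Fin 3 × Fin 3)) ∉ N.SN P := by
  rw [← not_and_or]
  rintro ⟨⟨a, ha⟩, ⟨b, hb⟩⟩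
  have ha := N.mem_iff_of_arcPattern_eq ha
  have hb := N.mem_iff_of_arcPattern_eq hb
  have hai : a ∈ P h i := (ha (h, i)).2 (by simp)
  have haj : a ∈ P h j := (ha (h, j)).2 (by simp)
  have hal : a ∉ P h l := fun H => by simpa [hil.symm, hjl.symm] using (ha (h, l)).1 H
  have hbi : b ∈ P h i := (hb (h, i)).2 (by simp)
  have hbl : b ∈ P h l := (hb (h, l)).2 (by simp)
  have hbj : b ∉ P h j := fun H => by simpa [hij.symm, hjl] using (hb (h, j)).1 H
  have hpaths := hP.1.1
  obtain ⟨σ, hσi, hσj, hσ⟩ :=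
    N.exists_common_prefix_of_lcsCount_eq_one (hpaths h i) (hpaths h j) hl₁ hh₁
  obtain ⟨τ, hτi, hτl, hτ⟩ :=
    N.exists_common_prefix_of_lcsCount_eq_one (hpaths h i) (hpaths h l) hl₂ hh₂
  rcases List.prefix_or_prefix_of_prefix hσi hτi with hστ | hτσ
  · exact hal (hτl.subset (hστ.subset (hσ a hai haj)))
  · exact hbj (hσj.subset (hτσ.subset (hτ b hbi hbl)))

/-- Lemma 6 of the paper: in a stable 3-pair network, if
`h ∈ m_{i,j}^{l₁} ∩ m_{i,l}^{l₂} ∩ m_{j,l}^{l₃}` for some `l₁ ∈ {i,j}`,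
`l₂ ∈ {i,l}`, `l₃ ∈ {j,l}` and pairwise distinct `i, j, l`, then
`{(h,i),(h,j)} ∉ S_N` or `{(h,i),(h,l)} ∉ S_N`. -/
theorem statement9 (N : KPairNetwork 3) (P : Fin 3 → Fin 3 → List N.A)
    (hP : N.IsStableSystem P)
    (h i j l : Fin 3) (hij : i ≠ j) (hil : i ≠ l) (hjl : j ≠ l)
    (l₁ l₂ l₃ : Fin 3)
    (hl₁ : l₁ = i ∨ l₁ = j) (hl₂ : l₂ = i ∨ l₂ = l) (hl₃ : l₃ = j ∨ l₃ = l)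
    (hh₁ : h ∈ N.mset P i j l₁) (hh₂ : h ∈ N.mset P i l l₂)
    (hh₃ : h ∈ N.mset P j l l₃) :
    ({(h, i), (h, j)} : Finset (Fin 3 × Fin 3)) ∉ N.SN P ∨
      ({(h, i), (h, l)} : Finset (Fin 3 × Fin 3)) ∉ N.SN P :=
  statement9_general N P hP h i j l hij hil hjl l₁ l₂ hl₁ hl₂ hh₁ hh₂
end
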